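/- arXiv:2102.08146 — 2 statements merged into one kernel-verified Lean document; each statement's English description precedes it below -/
import Mathlib

section
/- α-equivalence ∼ on ground letrec expressions is an equivalence relation (reflexive, symmetric, and transitive). -/
/-- Expressions of the ground letrec language LRL: atoms (coded as naturals),
lambda abstractions, applications of function symbols (coded as naturals) to
argument lists, and recursive-let expressions. -/
inductive Expr : Type where
  | atom : ℕ → Expr
  | lam : ℕ → Expr → Expr
  | app : ℕ → List Expr → Expr
  | letrec : List (ℕ × Expr) → Expr → Expr

/-- Action of an atom permutation on expressions (renames all atoms, incl. binders). -/
def permExpr (π : Equiv.Perm ℕ) : Expr → Expr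
  | .atom a => .atom (π a)
  | .lam a e => .lam (π a) (permExpr π e)
  | .app f es => .app f (es.attach.map fun e => permExpr π e.1)
  | .letrec env r =>
      .letrec (env.attach.map fun p => (π p.1.1, permExpr π p.1.2)) (permExpr π r)
decreasing_by
  all_goals simp_wf
  · have := List.sizeOf_lt_of_mem e.2; omega
  · obtain ⟨⟨x,y⟩, hm⟩ := p; have := List.sizeOf_lt_of_mem hm
    simp only [Prod.mk.sizeOf_spec] at this; simp; omega

/-- The set of free atoms of an expression. -/
def FA : Expr → Finset ℕ
  | .atom a => {a}
  | .lam a e => FA e \ {a}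
  | .app _ es => (es.attach.map fun e => FA e.1).foldr (· ∪ ·) ∅
  | .letrec env r =>
      ((env.attach.map fun p => FA p.1.2).foldr (· ∪ ·) ∅ ∪ FA r) \
        env.foldr (fun p s => insert p.1 s) ∅
decreasing_by
  all_goals simp_wf
  · have := List.sizeOf_lt_of_mem e.2; omega
  · obtain ⟨⟨x,y⟩, hm⟩ := p; have := List.sizeOf_lt_of_mem hm
    simp only [Prod.mk.sizeOf_spec] at this; simp; omega

/-- A permutation of atoms is finite iff its support is a finite set. -/
def FinSupp (π : Equiv.Perm ℕ) : Prop := {a | π a ≠ a}.Finite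

/-- α-equivalence on ground letrec expressions (Definition of the paper):
environments are compared up to a permutation `ρ` of the bindings together
with an atom permutation `π` mapping the binders of the right environment to
those of the left, with the appropriate freshness conditions. -/
inductive Aeq : Expr → Expr → Prop where
  | atom (a : ℕ) : Aeq (.atom a) (.atom a)
  | app (f : ℕ) {es es' : List Expr} (h : es.length = es'.length)
      (hes : ∀ i : Fin es.length, Aeq (es.get i) (es'.get (Fin.cast h i))) :
      Aeq (.app f es) (.app f es')
  | lamSame (a : ℕ) {e e' : Expr} (h : Aeq e e') : Aeq (.lam a e) (.lam a e')
  | lamDiff (a b : ℕ) {e e' : Expr} (hne : a ≠ b) (hf : a ∉ FA e')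
      (h : Aeq e (permExpr (Equiv.swap a b) e')) : Aeq (.lam a e) (.lam b e')
  | letrec {env env' : List (ℕ × Expr)} {r r' : Expr} (π : Equiv.Perm ℕ)
      (ρ : Equiv.Perm (Fin env.length)) (h : env.length = env'.length)
      (hdom : ∀ a, π a ≠ a → a ∈ env.map Prod.fst ∨ a ∈ env'.map Prod.fst)
      (hbind : ∀ i : Fin env.length, π (env'.get (Fin.cast h (ρ i))).1 = (env.get i).1)
      (hfresh : ∀ a ∈ env.map Prod.fst, a ∉ FA (Expr.letrec env' r'))
      (hbody : ∀ i : Fin env.length,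
        Aeq (env.get i).2 (permExpr π (env'.get (Fin.cast h (ρ i))).2))
      (hr : Aeq r (permExpr π r')) :
      Aeq (.letrec env r) (.letrec env' r')

/-- Subexpression relation. -/
inductive IsSub : Expr → Expr → Prop where
  | refl (e : Expr) : IsSub e e
  | lam {s e : Expr} (a : ℕ) : IsSub s e → IsSub s (.lam a e)
  | app {s e : Expr} (f : ℕ) {es : List Expr} : e ∈ es → IsSub s e → IsSub s (.app f es)
  | letrecBody {s r : Expr} {env : List (ℕ × Expr)} : IsSub s r → IsSub s (.letrec env r)
  | letrecEnv {s r : Expr} {env : List (ℕ × Expr)} {p : ℕ × Expr} :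
      p ∈ env → IsSub s p.2 → IsSub s (.letrec env r)

/-- Free atoms of the right-hand sides of an environment. -/
def envFA (env : List (ℕ × Expr)) : Finset ℕ := (env.map fun p => FA p.2).foldr (· ∪ ·) ∅

/-- An expression contains garbage: some letrec subexpression has a nonempty
part of its environment whose binders are free neither in the rest of the
environment nor in the body. -/
def HasGarbage (e : Expr) : Prop :=
  ∃ env r, IsSub (.letrec env r) e ∧
    ∃ envg envng : List (ℕ × Expr), env.Perm (envg ++ envng) ∧ envg ≠ [] ∧
      ∀ a ∈ envg.map Prod.fst, a ∉ envFA envng ∧ a ∉ FA r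

/-- An expression is garbage-free. -/
def GarbageFree (e : Expr) : Prop := ¬ HasGarbage e

/-!
Two facts carry the proof: `Aeq` is equivariant under atom permutations and preserves free
atoms, and `Aeq e (permExpr π e)` whenever `π` fixes the free atoms of `e`. Symmetry then inverts
the atom permutation of each `letrec` step. For transitivity, the composite of the two atom
permutations maps the binders correctly but may move atoms outside them, which the `letrec` rule
forbids; it is replaced by a permutation that agrees with it on binders and free atoms and is
supported on the binders, obtained by extending a finite injection. Since the middle expression
is arbitrary, transitivity is proved by structural induction on the left expression alone.
-/

open Equiv

theorem Equiv.Perm.exists_eqOn_of_injOn {α : Type*} [DecidableEq α] {s : Finset α} {g : α → α}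
    (hg : Set.InjOn g s) :
    ∃ τ : Perm α, (∀ x ∈ s, τ x = g x) ∧ ∀ x, τ x ≠ x → x ∈ s ∪ s.image g := by
  set t := s ∪ s.image g
  set s' : Finset t := Finset.univ.filter fun x => x.1 ∈ s
  obtain ⟨e, he⟩ := Finset.exists_equiv_extend_of_card_eq (Fintype.card_coe t) (s := s')
    (f := fun x => g x)
    (by
      intro y hy
      obtain ⟨x, hx, rfl⟩ := Finset.mem_image.1 hy
      exact Finset.mem_union_right _ (Finset.mem_image_of_mem g (Finset.mem_filter.1 hx).2))
    (fun x hx y hy hxy =>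
      Subtype.ext (hg (Finset.mem_filter.1 hx).2 (Finset.mem_filter.1 hy).2 hxy))
  refine ⟨Perm.ofSubtype e, fun x hx => ?_, fun x hx => ?_⟩
  · have hxt : x ∈ t := Finset.mem_union_left _ hx
    rw [Perm.ofSubtype_apply_of_mem e hxt]
    exact he ⟨x, hxt⟩ (Finset.mem_filter.2 ⟨Finset.mem_univ _, hx⟩)
  · by_contra hxt
    exact hx (Perm.ofSubtype_apply_of_not_mem e hxt)

theorem Equiv.swap_mul_swap_apply_of_ne {α : Type*} [DecidableEq α] {a b c x : α} (hxa : x ≠ a)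
    (hxb : x ≠ b) : (swap a b * swap b c) x = swap a c x := by
  rw [Perm.mul_apply]
  by_cases hxc : x = c
  · rw [hxc, swap_apply_right, swap_apply_right, swap_apply_right]
  · rw [swap_apply_of_ne_of_ne hxb hxc, swap_apply_of_ne_of_ne hxa hxb,
      swap_apply_of_ne_of_ne hxa hxc]

theorem List.exists_get_cast_iff {α : Type*} {l : List α} {n : ℕ} (h : n = l.length)
    (ρ : Equiv.Perm (Fin n)) {P : α → Prop} :
    (∃ i, P (l.get (Fin.cast h (ρ i)))) ↔ ∃ a ∈ l, P a := by
  refine ⟨fun ⟨i, hi⟩ => ⟨_, l.get_mem _, hi⟩, fun ⟨a, ha, hP⟩ => ?_⟩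
  obtain ⟨j, rfl⟩ := List.mem_iff_get.1 ha
  exact ⟨ρ.symm (Fin.cast h.symm j), by simpa using hP⟩

theorem Finset.mem_foldr_union {α : Type*} [DecidableEq α] {a : α} {l : List (Finset α)} :
    a ∈ l.foldr (· ∪ ·) ∅ ↔ ∃ s ∈ l, a ∈ s := by
  induction l with
  | nil => simp
  | cons s l ih => simp [ih]

@[elab_as_elim]
theorem Expr.induction {P : Expr → Prop} (atom : ∀ a, P (.atom a))
    (lam : ∀ a e, P e → P (.lam a e)) (app : ∀ f es, (∀ e ∈ es, P e) → P (.app f es))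
    (letrec : ∀ env r, (∀ p ∈ env, P p.2) → P r → P (.letrec env r)) : ∀ e, P e
  | .atom a => atom a
  | .lam a e => lam a e (Expr.induction atom lam app letrec e)
  | .app f es => app f es fun e _ => Expr.induction atom lam app letrec e
  | .letrec env r =>
      letrec env r (fun p _ => Expr.induction atom lam app letrec p.2)
        (Expr.induction atom lam app letrec r)
decreasing_by
  all_goals simp_wf
  · have := List.sizeOf_lt_of_mem ‹e ∈ es›; omega
  · obtain ⟨x, y⟩ := p
    have := List.sizeOf_lt_of_mem ‹(x, y) ∈ env›
    simp only [Prod.mk.sizeOf_spec] at this; simp; omega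

section Unfolding

variable (π : Perm ℕ) (a f : ℕ) (e : Expr) (es : List Expr) (env : List (ℕ × Expr)) (r : Expr)

@[simp] theorem permExpr_atom : permExpr π (.atom a) = .atom (π a) := by rw [permExpr]

@[simp] theorem permExpr_lam : permExpr π (.lam a e) = .lam (π a) (permExpr π e) := by
  rw [permExpr]

@[simp] theorem permExpr_app : permExpr π (.app f es) = .app f (es.map (permExpr π)) := by
  rw [permExpr, List.attach_map_val]

@[simp] theorem permExpr_letrec :
    permExpr π (.letrec env r) =
      .letrec (env.map (Prod.map π (permExpr π))) (permExpr π r) := by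
  rw [permExpr]
  congr 1
  exact List.attach_map_val (f := fun p : ℕ × Expr => (π p.1, permExpr π p.2))

@[simp] theorem FA_atom : FA (.atom a) = {a} := by rw [FA]

@[simp] theorem FA_lam : FA (.lam a e) = FA e \ {a} := by rw [FA]

theorem mem_FA_app {f : ℕ} {es : List Expr} {x : ℕ} : x ∈ FA (.app f es) ↔ ∃ e ∈ es, x ∈ FA e := by
  rw [FA, List.attach_map_val, Finset.mem_foldr_union]
  simp

theorem mem_envFA {env : List (ℕ × Expr)} {x : ℕ} : x ∈ envFA env ↔ ∃ p ∈ env, x ∈ FA p.2 := by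
  rw [envFA, Finset.mem_foldr_union]
  simp

theorem FA_letrec : FA (.letrec env r) = (envFA env ∪ FA r) \ (env.map Prod.fst).toFinset := by
  rw [FA, List.attach_map_val (f := fun p : ℕ × Expr => FA p.2)]
  congr 1
  induction env with
  | nil => rfl
  | cons p env ih => simp [ih]

end Unfolding

@[simp] theorem permExpr_one (e : Expr) : permExpr 1 e = e := by
  induction e using Expr.induction with
  | atom a => simp
  | lam a e ih => simp [ih]
  | app f es ih => simp [List.map_congr_left ih]
  | letrec env r ihe ihr =>
      simp only [permExpr_letrec, ihr]
      congr
      conv_rhs => rw [← List.map_id env]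
      exact List.map_congr_left fun p hp => Prod.ext rfl (ihe p hp)

theorem permExpr_mul (π σ : Perm ℕ) (e : Expr) :
    permExpr π (permExpr σ e) = permExpr (π * σ) e := by
  induction e using Expr.induction with
  | atom a => simp
  | lam a e ih => simp [ih]
  | app f es ih => simpa using ih
  | letrec env r ihe ihr =>
      simp only [permExpr_letrec, ihr, List.map_map]
      congr 1
      exact List.map_congr_left fun p hp => Prod.ext rfl (ihe p hp)

theorem FA_permExpr (π : Perm ℕ) (e : Expr) : FA (permExpr π e) = (FA e).image π := by
  induction e using Expr.induction with
  | atom a => simp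
  | lam a e ih => simp [ih, Finset.image_sdiff _ _ π.injective]
  | app f es ih =>
      ext x
      simp only [permExpr_app, mem_FA_app, List.mem_map, exists_exists_and_eq_and,
        Finset.mem_image]
      grind
  | letrec env r ihe ihr =>
      have henv : envFA (env.map (Prod.map π (permExpr π))) = (envFA env).image π := by
        ext x
        simp only [mem_envFA, List.mem_map, exists_exists_and_eq_and, Prod.map_snd,
          Finset.mem_image]
        constructor
        · rintro ⟨p, hp, hx⟩
          obtain ⟨y, hy, rfl⟩ := Finset.mem_image.1 (ihe p hp ▸ hx)
          exact ⟨y, ⟨p, hp, hy⟩, rfl⟩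
        · rintro ⟨y, ⟨p, hp, hy⟩, rfl⟩
          exact ⟨p, hp, ihe p hp ▸ Finset.mem_image_of_mem _ hy⟩
      have hbinders : (env.map (Prod.fst ∘ Prod.map π (permExpr π))).toFinset =
          (env.map Prod.fst).toFinset.image π := by
        ext x
        simp
      rw [permExpr_letrec, FA_letrec, FA_letrec, henv, ihr, List.map_map, hbinders,
        ← Finset.image_union, Finset.image_sdiff _ _ π.injective]

theorem not_mem_FA_letrec_of_mem {env : List (ℕ × Expr)} {r : Expr} {a : ℕ}
    (ha : a ∈ env.map Prod.fst) : a ∉ FA (.letrec env r) := by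
  simp [FA_letrec, ha]

section LetrecRule

variable {env env' : List (ℕ × Expr)} {π : Perm ℕ} {ρ : Perm (Fin env.length)}
  (h : env.length = env'.length)
include h

theorem binders_eq_image_of_letrec
    (hbind : ∀ i, π (env'.get (Fin.cast h (ρ i))).1 = (env.get i).1) :
    (env.map Prod.fst).toFinset = (env'.map Prod.fst).toFinset.image π := by
  ext b
  simp only [List.mem_toFinset, Finset.mem_image, List.mem_map, exists_exists_and_eq_and]
  rw [List.exists_mem_iff_get, ← List.exists_get_cast_iff h ρ]
  simp only [hbind]

theorem envFA_eq_image_of_letrec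
    (hFA : ∀ i, FA (env.get i).2 = (FA (env'.get (Fin.cast h (ρ i))).2).image π) :
    envFA env = (envFA env').image π := by
  ext x
  simp only [mem_envFA, Finset.mem_image]
  rw [List.exists_mem_iff_get]
  simp only [hFA, Finset.mem_image]
  rw [List.exists_get_cast_iff h ρ (P := fun p => ∃ y ∈ FA p.2, π y = x)]
  exact ⟨fun ⟨p, hp, y, hy, hx⟩ => ⟨y, ⟨p, hp, hy⟩, hx⟩,
    fun ⟨y, ⟨p, hp, hy⟩, hx⟩ => ⟨p, hp, y, hy, hx⟩⟩

end LetrecRule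

theorem perm_apply_eq_of_mem_FA_letrec {env env' : List (ℕ × Expr)} {r' : Expr} {π : Perm ℕ}
    (hdom : ∀ a, π a ≠ a → a ∈ env.map Prod.fst ∨ a ∈ env'.map Prod.fst)
    (hfresh : ∀ a ∈ env.map Prod.fst, a ∉ FA (.letrec env' r')) {x : ℕ}
    (hx : x ∈ FA (.letrec env' r')) : π x = x := by
  by_contra hne
  rcases hdom x hne with hm | hm
  · exact hfresh x hm hx
  · exact not_mem_FA_letrec_of_mem hm hx

theorem mem_binders_or_mem_FA_letrec {env : List (ℕ × Expr)} {r : Expr} {x : ℕ}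
    (hx : x ∈ envFA env ∪ FA r) : x ∈ env.map Prod.fst ∨ x ∈ FA (.letrec env r) := by
  rw [FA_letrec, Finset.mem_sdiff, List.mem_toFinset]
  tauto

theorem exists_perm_undo_letrec {env : List (ℕ × Expr)} {r : Expr} {π : Perm ℕ}
    (hπ : ∀ a ∈ FA (.letrec env r), π a = a) :
    ∃ τ : Perm ℕ, (∀ x, x ∈ env.map Prod.fst ∨ x ∈ FA (.letrec env r) → τ (π x) = x) ∧
      ∀ x, τ x ≠ x → x ∈ env.map Prod.fst ∨ x ∈ (env.map Prod.fst).map π := by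
  set B := (env.map Prod.fst).toFinset
  obtain ⟨τ, hτB, hτ⟩ := Perm.exists_eqOn_of_injOn (s := B.image π) π⁻¹.injective.injOn
  have hτ' : ∀ x, τ x ≠ x → x ∈ B ∨ x ∈ B.image π := fun x hx => by
    simpa [Finset.image_image, or_comm] using hτ x hx
  refine ⟨τ, fun x hx => ?_, fun x hx => by simpa [B] using hτ' x hx⟩
  rcases hx with hxB | hxF
  · simpa using hτB (π x) (Finset.mem_image_of_mem π (List.mem_toFinset.2 hxB))
  have hπx := hπ x hxF
  have hxB : x ∉ B := fun h => not_mem_FA_letrec_of_mem (List.mem_toFinset.1 h) hxF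
  rw [hπx]
  by_contra hτx
  rcases hτ' x hτx with h | h
  · exact hxB h
  · obtain ⟨y, hy, hyx⟩ := Finset.mem_image.1 h
    exact hxB (π.injective (hyx.trans hπx.symm) ▸ hy)

namespace Aeq

protected theorem refl (e : Expr) : Aeq e e := by
  induction e using Expr.induction with
  | atom a => exact .atom a
  | lam a e ih => exact .lamSame a ih
  | app f es ih => exact .app f rfl fun i => ih _ (es.get_mem i)
  | letrec env r ihe ihr =>
      refine .letrec 1 (Equiv.refl _) rfl (fun a ha => absurd rfl ha) (fun i => rfl)
        (fun a ha => not_mem_FA_letrec_of_mem ha) (fun i => ?_) (by simpa using ihr)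
      simpa using ihe _ (env.get_mem i)

theorem perm {e e' : Expr} (σ : Perm ℕ) (h : Aeq e e') :
    Aeq (permExpr σ e) (permExpr σ e') := by
  induction h with
  | atom a => simpa using Aeq.atom (σ a)
  | @app f es es' hlen _ ih =>
      simpa using Aeq.app f (by simpa using hlen) fun i => by simpa using ih (Fin.cast (by simp) i)
  | lamSame a _ ih => simpa using .lamSame _ ih
  | @lamDiff a b e e' hne hf _ ih =>
      rw [permExpr_lam, permExpr_lam]
      refine .lamDiff (σ a) (σ b) (σ.injective.ne hne) ?_ ?_
      · simpa [FA_permExpr] using hf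
      · rwa [permExpr_mul, ← Equiv.mul_swap_eq_swap_mul, ← permExpr_mul]
  | @letrec env env' r r' π ρ hlen hdom hbind hfresh _ _ ihb ihr =>
      have hB (l : List (ℕ × Expr)) :
          (l.map (Prod.map σ (permExpr σ))).map Prod.fst = (l.map Prod.fst).map σ := by
        simp [Function.comp_def]
      rw [permExpr_letrec, permExpr_letrec]
      refine .letrec (σ * π * σ⁻¹) ((finCongr (List.length_map _).symm).permCongr ρ)
        (by simpa using hlen) (fun a ha => ?_) (fun i => ?_) (fun a ha => ?_) (fun i => ?_) ?_
      · have hπ : π (σ⁻¹ a) ≠ σ⁻¹ a := fun h => ha (by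
          rw [Perm.mul_apply, Perm.mul_apply, h]; simp)
        rw [hB, hB, ← σ.apply_symm_apply a]
        exact (hdom _ hπ).imp List.mem_map_of_mem List.mem_map_of_mem
      · simpa using hbind (Fin.cast (by simp) i)
      · rw [← permExpr_letrec, FA_permExpr]
        rw [hB] at ha
        obtain ⟨b, hb, rfl⟩ := List.mem_map.1 ha
        rw [σ.injective.mem_finset_image]
        exact hfresh b hb
      · simpa [permExpr_mul] using ihb (Fin.cast (by simp) i)
      · simpa [permExpr_mul] using ihr

theorem FA_eq {e e' : Expr} (h : Aeq e e') : FA e = FA e' := by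
  induction h with
  | atom a => rfl
  | @app f es es' hlen _ ih =>
      ext x
      simp only [mem_FA_app]
      rw [List.exists_mem_iff_get, ← List.exists_get_cast_iff hlen (Equiv.refl _)]
      simp only [ih, Equiv.refl_apply]
  | lamSame a _ ih => rw [FA_lam, FA_lam, ih]
  | @lamDiff a b e e' hne hf _ ih =>
      ext x
      simp only [FA_lam, ih, FA_permExpr, Finset.mem_sdiff, Finset.mem_image,
        Finset.mem_singleton]
      constructor
      · rintro ⟨⟨y, hy, rfl⟩, hya⟩
        have hya' : y ≠ a := fun h => hf (h ▸ hy)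
        have hyb : y ≠ b := fun h => hya (by rw [h, swap_apply_right])
        rw [swap_apply_of_ne_of_ne hya' hyb]
        exact ⟨hy, hyb⟩
      · rintro ⟨hx, hxb⟩
        have hxa : x ≠ a := fun h => hf (h ▸ hx)
        exact ⟨⟨x, hx, swap_apply_of_ne_of_ne hxa hxb⟩, hxa⟩
  | @letrec env env' r r' π ρ hlen hdom hbind hfresh _ _ ihb ihr =>
      have hfix : ∀ x ∈ FA (.letrec env' r'), π x = x := fun x hx =>
        perm_apply_eq_of_mem_FA_letrec hdom hfresh hx
      have henv : envFA env = (envFA env').image π :=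
        envFA_eq_image_of_letrec hlen fun i => by rw [ihb i, FA_permExpr]
      rw [FA_letrec, henv, ihr, FA_permExpr, binders_eq_image_of_letrec hlen hbind,
        ← Finset.image_union, ← Finset.image_sdiff _ _ π.injective, ← FA_letrec,
        Finset.image_congr hfix, Finset.image_id']

theorem self_permExpr_of_fix {e : Expr} {π : Perm ℕ} (hπ : ∀ a ∈ FA e, π a = a) :
    Aeq e (permExpr π e) := by
  induction e using Expr.induction generalizing π with
  | atom a => simpa [hπ a (by simp)] using Aeq.atom a
  | lam a e ih =>
      have hfix : ∀ x ∈ FA e, x ≠ a → π x = x := fun x hx hxa => hπ x (by simp [hx, hxa])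
      rw [permExpr_lam]
      by_cases ha : π a = a
      · rw [ha]
        exact .lamSame a (ih fun x hx => if hxa : x = a then hxa ▸ ha else hfix x hx hxa)
      refine .lamDiff a (π a) (Ne.symm ha) ?_ (permExpr_mul _ π e ▸ ih fun x hx => ?_)
      · rw [FA_permExpr]
        intro hmem
        obtain ⟨y, hy, hya⟩ := Finset.mem_image.1 hmem
        have hy' : y ≠ a := fun h => ha (h ▸ hya)
        exact hy' (hfix y hy hy' ▸ hya)
      · rw [Perm.mul_apply]
        by_cases hxa : x = a
        · rw [hxa, swap_apply_right]
        · rw [hfix x hx hxa, swap_apply_of_ne_of_ne hxa fun h => hxa (π.injective (by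
            rw [← h, hfix x hx hxa]))]
  | app f es ih =>
      rw [permExpr_app]
      refine .app f (by simp) fun i => ?_
      simpa using ih _ (es.get_mem i) fun x hx => hπ x (mem_FA_app.2 ⟨_, es.get_mem i, hx⟩)
  | letrec env r ihe ihr =>
      obtain ⟨τ, hτπ, hτ⟩ := exists_perm_undo_letrec hπ
      rw [permExpr_letrec]
      refine .letrec τ (Equiv.refl _) (List.length_map _).symm (fun a ha => ?_) (fun i => ?_)
        (fun a ha => ?_) (fun i => ?_) ?_
      · simpa [Function.comp_def] using hτ a ha
      · simpa using hτπ _ (.inl (List.mem_map_of_mem (env.get_mem i)))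
      · rw [← permExpr_letrec, FA_permExpr, Finset.image_congr hπ, Finset.image_id']
        exact not_mem_FA_letrec_of_mem ha
      · simpa [permExpr_mul] using ihe _ (env.get_mem i) fun x hx => hτπ x
          (mem_binders_or_mem_FA_letrec
            (Finset.mem_union_left _ (mem_envFA.2 ⟨_, env.get_mem i, hx⟩)))
      · simpa [permExpr_mul] using ihr fun x hx =>
          hτπ x (mem_binders_or_mem_FA_letrec (Finset.mem_union_right _ hx))

theorem permExpr_congr {e : Expr} {σ σ' : Perm ℕ} (h : ∀ a ∈ FA e, σ a = σ' a) :
    Aeq (permExpr σ e) (permExpr σ' e) := by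
  have hfix : ∀ a ∈ FA (permExpr σ e), (σ' * σ⁻¹) a = a := by
    intro a ha
    rw [FA_permExpr] at ha
    obtain ⟨y, hy, rfl⟩ := Finset.mem_image.1 ha
    rw [Perm.mul_apply, Perm.inv_def, symm_apply_apply, h y hy]
  simpa [permExpr_mul, mul_assoc] using self_permExpr_of_fix hfix

protected theorem symm {e e' : Expr} (h : Aeq e e') : Aeq e' e := by
  induction h with
  | atom a => exact .atom a
  | app f hlen _ ih => exact .app f hlen.symm fun j => by simpa using ih (Fin.cast hlen.symm j)
  | lamSame a _ ih => exact .lamSame a ih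
  | @lamDiff a b e e' hne hf h ih =>
      refine .lamDiff b a hne.symm ?_ ?_
      · rw [h.FA_eq, FA_permExpr]
        intro hb
        obtain ⟨y, hy, hyb⟩ := Finset.mem_image.1 hb
        rw [swap_apply_eq_iff, swap_apply_right] at hyb
        exact hf (hyb ▸ hy)
      · simpa [permExpr_mul, swap_comm] using ih.perm (swap a b)
  | @letrec env env' r r' π ρ hlen hdom hbind hfresh hbody hr ihb ihr =>
      have hFA := (Aeq.letrec π ρ hlen hdom hbind hfresh hbody hr).FA_eq
      refine .letrec π⁻¹ ((finCongr hlen.symm).trans (ρ.symm.trans (finCongr hlen))) hlen.symm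
        (fun a ha => (hdom a fun h => ha (Perm.inv_eq_iff_eq.2 h.symm)).symm) (fun j => ?_)
        (fun a ha => hFA ▸ not_mem_FA_letrec_of_mem ha) (fun j => ?_) ?_
      · have := hbind (ρ.symm (Fin.cast hlen.symm j))
        simp only [List.get_eq_getElem, Fin.val_cast, Equiv.apply_symm_apply] at this
        simp [← this]
      · simpa [permExpr_mul] using (ihb (ρ.symm (Fin.cast hlen.symm j))).perm π⁻¹
      · simpa [permExpr_mul] using ihr.perm π⁻¹

theorem trans_letrec {env : List (ℕ × Expr)} {r e₂ e₃ : Expr}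
    (ihe : ∀ p ∈ env, ∀ {e₂ e₃}, Aeq p.2 e₂ → Aeq e₂ e₃ → Aeq p.2 e₃)
    (ihr : ∀ {e₂ e₃}, Aeq r e₂ → Aeq e₂ e₃ → Aeq r e₃)
    (h₁₂ : Aeq (.letrec env r) e₂) (h₂₃ : Aeq e₂ e₃) : Aeq (.letrec env r) e₃ := by
  have hFA₂₃ := h₂₃.FA_eq
  cases h₁₂ with | @letrec _ env₂ _ r₂ π ρ hlen hdom hbind hfresh hbody hr =>
  cases h₂₃ with | @letrec _ env₃ _ r₃ π₂ ρ₂ hlen₂ hdom₂ hbind₂ hfresh₂ hbody₂ hr₂ =>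
  set B₃ := (env₃.map Prod.fst).toFinset
  have hB : (env.map Prod.fst).toFinset = B₃.image (π * π₂) := by
    rw [binders_eq_image_of_letrec hlen hbind, binders_eq_image_of_letrec hlen₂ hbind₂,
      Finset.image_image, Perm.coe_mul]
  obtain ⟨τ, hτB, hτ⟩ := Perm.exists_eqOn_of_injOn (s := B₃) (π * π₂).injective.injOn
  rw [← hB] at hτ
  have hτ_fix : ∀ x ∈ FA (.letrec env₃ r₃), τ x = (π * π₂) x := by
    intro x hx
    have hx₂ : π₂ x = x := perm_apply_eq_of_mem_FA_letrec hdom₂ hfresh₂ hx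
    have hx₁ : π x = x := perm_apply_eq_of_mem_FA_letrec hdom hfresh (hFA₂₃ ▸ hx)
    rw [Perm.mul_apply, hx₂, hx₁]
    by_contra hτx
    rcases Finset.mem_union.1 (hτ x hτx) with h | h
    · exact not_mem_FA_letrec_of_mem (List.mem_toFinset.1 h) hx
    · exact hfresh x (List.mem_toFinset.1 h) (hFA₂₃ ▸ hx)
  have hτσ : ∀ x ∈ envFA env₃ ∪ FA r₃, τ x = (π * π₂) x := fun x hx =>
    (mem_binders_or_mem_FA_letrec hx).elim (fun h => hτB x (List.mem_toFinset.2 h))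
      (hτ_fix x)
  set ρ' := ρ.trans ((finCongr hlen).trans (ρ₂.trans (finCongr hlen).symm))
  have hρ' (i) : Fin.cast (hlen.trans hlen₂) (ρ' i) = Fin.cast hlen₂ (ρ₂ (Fin.cast hlen (ρ i))) :=
    Fin.ext (by simp [ρ'])
  refine .letrec τ ρ' (hlen.trans hlen₂) (fun a ha => ?_) (fun i => ?_)
    (fun a ha => hFA₂₃ ▸ hfresh a ha) (fun i => ?_) ?_
  · simpa [B₃, or_comm] using hτ a ha
  · rw [hρ', hτB _ (List.mem_toFinset.2 (List.mem_map_of_mem (List.get_mem _ _))),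
      Perm.mul_apply, hbind₂, hbind]
  · have hσ := ihe _ (env.get_mem i) (hbody i) ((hbody₂ (Fin.cast hlen (ρ i))).perm π)
    rw [permExpr_mul] at hσ
    rw [hρ']
    exact ihe _ (env.get_mem i) hσ (permExpr_congr fun x hx => (hτσ x (Finset.mem_union_left _
      (mem_envFA.2 ⟨_, env₃.get_mem _, hx⟩))).symm)
  · have hσ := ihr hr (hr₂.perm π)
    rw [permExpr_mul] at hσ
    exact ihr hσ (permExpr_congr fun x hx => (hτσ x (Finset.mem_union_right _ hx)).symm)

protected theorem trans {e₁ e₂ e₃ : Expr} (h₁₂ : Aeq e₁ e₂) (h₂₃ : Aeq e₂ e₃) : Aeq e₁ e₃ := by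
  induction e₁ using Expr.induction generalizing e₂ e₃ with
  | atom a =>
      cases h₁₂
      exact h₂₃
  | lam a e ih =>
      cases h₁₂ with
      | lamSame _ h =>
          cases h₂₃ with
          | lamSame _ h' => exact .lamSame a (ih h h')
          | lamDiff _ c hne hf h' => exact .lamDiff a c hne hf (ih h h')
      | lamDiff _ b hab ha h =>
          cases h₂₃ with
          | lamSame _ h' => exact .lamDiff a b hab (h'.FA_eq ▸ ha) (ih h (h'.perm _))
          | @lamDiff _ c _ e₃ hbc hb h' =>
              have h₁₃ := ih h (h'.perm (swap a b))
              rw [permExpr_mul] at h₁₃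
              by_cases hac : a = c
              · subst hac
                exact .lamSame a (by simpa [swap_comm b a] using h₁₃)
              have ha₃ : a ∉ FA e₃ := fun hx => ha (by
                rw [h'.FA_eq, FA_permExpr]
                exact Finset.mem_image.2 ⟨a, hx, swap_apply_of_ne_of_ne hab hac⟩)
              exact .lamDiff a c hac ha₃ (ih h₁₃ (permExpr_congr fun x hx =>
                swap_mul_swap_apply_of_ne (fun h => ha₃ (h ▸ hx)) (fun h => hb (h ▸ hx))))
  | app f es ih =>
      cases h₁₂ with | app _ hlen hes =>
      cases h₂₃ with | app _ hlen₂ hes₂ =>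
      exact .app f (hlen.trans hlen₂) fun i => ih _ (es.get_mem i) (hes i) (hes₂ (Fin.cast hlen i))
  | letrec env r ihe ihr => exact trans_letrec ihe ihr h₁₂ h₂₃

end Aeq

/-- α-equivalence on ground letrec expressions is an equivalence relation. -/
theorem aeq_equivalence : Equivalence Aeq :=
  ⟨Aeq.refl, Aeq.symm, Aeq.trans⟩
end

section
/- There exists a ground letrec expression t and a swapping (a b) with {a,b} ⊆ FA(t) such that (a b)·t ∼ t. Concretely, t = letrec c.a; d.b in True satisfies (a b)·t ∼ t and FA(t) = {a,b}. -/

lemma aeq_app_nil : Aeq (Expr.app 0 []) (Expr.app 0 []) :=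
  Aeq.app 0 rfl (fun i => i.elim0)

lemma key : Aeq (Expr.letrec [(2, .atom 1), (3, .atom 0)] (.app 0 []))
    (Expr.letrec [(2, .atom 0), (3, .atom 1)] (.app 0 [])) := by
  refine Aeq.letrec (Equiv.swap 2 3)
    ((Equiv.swap ⟨0, by norm_num⟩ ⟨1, by norm_num⟩ : Equiv.Perm (Fin 2))) rfl ?_ ?_ ?_ ?_ ?_
  · intro a ha
    have h2 : a = 2 ∨ a = 3 := by
      by_contra h; push_neg at h
      exact ha (Equiv.swap_apply_of_ne_of_ne h.1 h.2)
    left; simpa using h2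
  · intro i; fin_cases i <;> simp [Equiv.swap_apply_def]
  · intro a ha; simp at ha; simp [FA]; omega
  · intro i; fin_cases i <;>
      simp [permExpr, Equiv.swap_apply_def] <;> exact Aeq.atom _
  · simpa [permExpr] using aeq_app_nil

/-- There is a ground letrec expression `t` and a swapping `(a b)` with
`{a,b} ⊆ FA t` such that `(a b)·t ∼ t`.  Concretely, with atoms `a = 0`, `b = 1`,
`c = 2`, `d = 3` and 0-ary function symbol `True` (coded `0`), the expression
`t = letrec c.a; d.b in True` satisfies `(a b)·t ∼ t` and `FA t = {a, b}`. -/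
theorem nontrivial_fixpoint_exists :
    (∃ (t : Expr) (a b : ℕ), a ≠ b ∧ a ∈ FA t ∧ b ∈ FA t ∧
        Aeq (permExpr (Equiv.swap a b) t) t) ∧
    (Aeq (permExpr (Equiv.swap 0 1) (Expr.letrec [(2, .atom 0), (3, .atom 1)] (.app 0 [])))
        (Expr.letrec [(2, .atom 0), (3, .atom 1)] (.app 0 [])) ∧
      FA (Expr.letrec [(2, .atom 0), (3, .atom 1)] (.app 0 [])) = {0, 1}) := by
  have hFA : FA (Expr.letrec [(2, .atom 0), (3, .atom 1)] (.app 0 [])) = {0, 1} := by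
    simp [FA]
  have hperm : permExpr (Equiv.swap 0 1) (Expr.letrec [(2, .atom 0), (3, .atom 1)] (.app 0 []))
      = Expr.letrec [(2, .atom 1), (3, .atom 0)] (.app 0 []) := by
    simp [permExpr, Equiv.swap_apply_of_ne_of_ne]
  refine ⟨⟨Expr.letrec [(2, .atom 0), (3, .atom 1)] (.app 0 []), 0, 1, by norm_num, ?_, ?_, ?_⟩, ?_, hFA⟩
  · rw [hFA]; decide
  · rw [hFA]; decide
  · rw [hperm]; exact key
  · rw [hperm]; exact key
end
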